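/- arXiv:1006.2442 — 8 statements merged into one kernel-verified Lean document; each statement's English description precedes it below -/
import Mathlib

section
/- Let Γ be a group and (ρ_i : Γ → G_i)_{i∈I} a family of group homomorphisms with kernels N_i. Set N'_i = ⋂_{j≠i} N_j. If Γ = N_i · N'_i for every i ∈ I (with I finite), then the image of the product map ρ = (ρ_i) : Γ → ∏_i G_i equals the product ∏_i ρ_i(Γ), i.e. the ρ_i are independent. -/
/-- If `Γ = N_i · N'_i` for every `i` (with `I` finite), the `ρ_i` are independent. -/
theorem stmt_0 {Γ : Type*} [Group Γ] {I : Type*} [Finite I]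
    {G : I → Type*} [∀ i, Group (G i)] (ρ : ∀ i, Γ →* G i)
    (h : ∀ i : I, ∀ γ : Γ, ∃ a b : Γ, a ∈ (ρ i).ker ∧
      (∀ j : I, j ≠ i → b ∈ (ρ j).ker) ∧ γ = a * b) :
    ∀ γ : I → Γ, ∃ g : Γ, ∀ i, ρ i g = ρ i (γ i) := by
  intro γ
  cases nonempty_fintype I
  suffices H : ∀ s : Finset I, ∃ g : Γ, ∀ i ∈ s, ρ i g = ρ i (γ i) by
    obtain ⟨g, hg⟩ := H Finset.univ
    exact ⟨g, fun i => hg i (Finset.mem_univ i)⟩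
  intro s
  classical
  induction s using Finset.induction with
  | empty => exact ⟨1, fun i hi => absurd hi (Finset.notMem_empty i)⟩
  | @insert i s hi ih =>
    obtain ⟨g, hg⟩ := ih
    obtain ⟨a, b, ha, hb, hab⟩ := h i (g⁻¹ * γ i)
    refine ⟨g * b, fun j hj => ?_⟩
    rcases Finset.mem_insert.mp hj with rfl | hjs
    · have : ρ j b = ρ j (g⁻¹ * γ j) := by
        rw [hab, map_mul, ha, one_mul]
      rw [map_mul, this, map_mul, map_inv, mul_inv_cancel_left]
    · have hjne : j ≠ i := fun e => hi (e ▸ hjs)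
      rw [map_mul, hb j hjne, mul_one, hg j hjs]
end

section
/- Let Γ be a group, I finite, and ρ_i : Γ → G_i homomorphisms with kernels N_i, N'_i = ⋂_{j≠i} N_j. If the ρ_i are independent (the image of (ρ_i) : Γ → ∏ G_i equals ∏ ρ_i(Γ)), then Γ is generated by the subgroups N'_i together with ⋂_i N_i. -/
/-!
Let `π = (ρ_i) : Γ → ∏ G_i`, so that `⋂ N_i = ker π`. It suffices to show that `π` maps
`⨆ N'_i` onto a subgroup containing `π(Γ)`. Now `π(Γ) ⊆ ∏ ρ_i(Γ)`, and a finite product of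
subgroups is generated by its factors placed in single coordinates. Independence says exactly that
each such factor `Pi.mulSingle i (ρ_i(Γ))` is the image of an element of `Γ`, which then lies in
`N'_i` because its other coordinates are trivial.
-/

theorem Subgroup.pi_le_iSup_map_mulSingle {ι : Type*} [Finite ι] [DecidableEq ι]
    {G : ι → Type*} [∀ i, Group (G i)] (H : ∀ i, Subgroup (G i)) :
    Subgroup.pi Set.univ H ≤ ⨆ i, (H i).map (MonoidHom.mulSingle G i) := by
  have := Fintype.ofFinite ι
  intro x hx
  rw [← Finset.noncommProd_mulSingle x]
  exact Subgroup.noncommProd_mem _ _ fun i _ =>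
    Subgroup.mem_iSup_of_mem i (Subgroup.mem_map_of_mem _ (hx i trivial))

section Independence

variable {Γ : Type*} [Group Γ] {I : Type*} {G : I → Type*} [∀ i, Group (G i)]

theorem MonoidHom.ker_pi (ρ : ∀ i, Γ →* G i) : (MonoidHom.pi ρ).ker = ⨅ i, (ρ i).ker := by
  ext g
  simp [funext_iff]

theorem MonoidHom.range_pi_le_pi_range (ρ : ∀ i, Γ →* G i) :
    (MonoidHom.pi ρ).range ≤ Subgroup.pi Set.univ fun i => (ρ i).range := by
  rintro _ ⟨g, rfl⟩ i -
  exact ⟨g, rfl⟩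

theorem map_mulSingle_range_le_map_pi_iInf_ker [DecidableEq I] (ρ : ∀ i, Γ →* G i)
    (h : ∀ γ : I → Γ, ∃ g : Γ, ∀ i, ρ i g = ρ i (γ i)) (i : I) :
    (ρ i).range.map (MonoidHom.mulSingle G i) ≤
      (⨅ (j : I) (_ : j ≠ i), (ρ j).ker).map (MonoidHom.pi ρ) := by
  rintro _ ⟨_, ⟨γ, rfl⟩, rfl⟩
  obtain ⟨g, hg⟩ := h (Pi.mulSingle i γ)
  have hg_single : ∀ j, ρ j g = Pi.mulSingle i (ρ i γ) j := fun j =>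
    (hg j).trans (Pi.apply_mulSingle (fun j => ρ j) (fun j => map_one _) i γ j)
  refine ⟨g, ?_, funext hg_single⟩
  refine Subgroup.mem_iInf.2 fun j => Subgroup.mem_iInf.2 fun hji => ?_
  rw [MonoidHom.mem_ker, hg_single, Pi.mulSingle_eq_of_ne hji]

end Independence

/-- If the `ρ_i` are independent (`I` finite), then `Γ` is generated by the
subgroups `N'_i = ⋂_{j ≠ i} ker ρ_j` together with `⋂ i, ker ρ_i`. -/
theorem stmt_1 {Γ : Type*} [Group Γ] {I : Type*} [Finite I]
    {G : I → Type*} [∀ i, Group (G i)] (ρ : ∀ i, Γ →* G i)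
    (h : ∀ γ : I → Γ, ∃ g : Γ, ∀ i, ρ i g = ρ i (γ i)) :
    (⨆ i : I, ⨅ (j : I) (_ : j ≠ i), (ρ j).ker) ⊔ (⨅ i : I, (ρ i).ker) = ⊤ := by
  classical
  rw [eq_top_iff, ← MonoidHom.ker_pi, ← Subgroup.map_le_map_iff, ← MonoidHom.range_eq_map,
    Subgroup.map_iSup]
  calc (MonoidHom.pi ρ).range
      ≤ Subgroup.pi Set.univ fun i => (ρ i).range := MonoidHom.range_pi_le_pi_range ρ
    _ ≤ ⨆ i, (ρ i).range.map (MonoidHom.mulSingle G i) := Subgroup.pi_le_iSup_map_mulSingle _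
    _ ≤ _ := iSup_mono (map_mulSingle_range_le_map_pi_iInf_ker ρ h)
end

section
/- Let Γ be a compact profinite group and ρ_i : Γ → G_i (i ∈ I) continuous homomorphisms into Hausdorff topological groups. If the image ρ(Γ) of ρ = (ρ_i) is an open (equivalently finite-index) subgroup of ∏_i ρ_i(Γ), then there exists an open subgroup Γ' ≤ Γ such that the restrictions of the ρ_i to Γ' are independent, i.e. the image of Γ' under ρ equals ∏_i ρ_i(Γ'). -/
open Filter Topology

/-!
Since `ρ(Γ)` is compact, it is closed in `∏ ρ_i(Γ)`; being of finite index there, it is open. So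
`ρ(Γ)` contains `∏ ρ_i(Γ) ∩ ∏_{i ∈ F} u_i` for a finite `F` and neighbourhoods `u_i` of `1`. Take an
open subgroup `Δ` of `Γ` with `ρ_i(Δ) ⊆ u_i` for `i ∈ F`, and let `Γ' = ⋂_{i ∈ F} ρ_i⁻¹(ρ_i(Δ))`.
Membership in `Γ'` only depends on the coordinates `ρ_i`, `i ∈ F`, so any `x ∈ ∏ ρ_i(Γ')` is some
`ρ(g)`, and then automatically `g ∈ Γ'`.
-/

theorem Subgroup.exists_mem_nhds_one_inter_subset_of_isClosed_of_relIndex_ne_zero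
    {G : Type*} [Group G] [TopologicalSpace G] [IsTopologicalGroup G] {H K : Subgroup G}
    (hH : IsClosed (H : Set G)) (hHK : H.relIndex K ≠ 0) :
    ∃ V ∈ 𝓝 (1 : G), V ∩ K ⊆ H := by
  have : (H.subgroupOf K).FiniteIndex := ⟨hHK⟩
  have hopen : IsOpen (H.subgroupOf K : Set K) :=
    (H.subgroupOf K).isOpen_of_isClosed_of_finiteIndex (hH.preimage continuous_subtype_val)
  obtain ⟨V, hV, hVH⟩ := (mem_nhds_subtype (K : Set G) 1 _).mp (hopen.mem_nhds (one_mem _))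
  exact ⟨V, hV, fun x ⟨hxV, hxK⟩ => hVH (a := ⟨x, hxK⟩) hxV⟩

theorem ProfiniteGrp.exists_openSubgroup_subset_of_mem_nhds_one {Γ : Type*} [Group Γ]
    [TopologicalSpace Γ] [IsTopologicalGroup Γ] [CompactSpace Γ] [TotallyDisconnectedSpace Γ]
    {V : Set Γ} (hV : V ∈ 𝓝 1) : ∃ Δ : OpenSubgroup Γ, (Δ : Set Γ) ⊆ V := by
  obtain ⟨U, hUV, hU, h1U⟩ := mem_nhds_iff.mp hV
  obtain ⟨Δ, hΔU⟩ := exist_openNormalSubgroup_sub_open_nhds_of_one hU h1U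
  exact ⟨Δ.toOpenSubgroup, hΔU.trans hUV⟩

section Independence

variable {Γ : Type*} [Group Γ] {I : Type*} {G : I → Type*} [∀ i, Group (G i)]

def IndependentOn (ρ : ∀ i, Γ →* G i) (Γ' : Subgroup Γ) : Prop :=
  ∀ x : ∀ i, G i, (∀ i, ∃ g ∈ Γ', ρ i g = x i) → ∃ g ∈ Γ', ∀ i, ρ i g = x i

theorem independentOn_iInf_comap_map {ρ : ∀ i, Γ →* G i} {F : Set I} {u : ∀ i, Set (G i)}
    {Δ : Subgroup Γ} (hΔ : ∀ g ∈ Δ, ∀ i ∈ F, ρ i g ∈ u i)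
    (hu : ∀ x : ∀ i, G i, (∀ i, x i ∈ (ρ i).range) → (∀ i ∈ F, x i ∈ u i) →
      x ∈ (MonoidHom.pi ρ).range) :
    IndependentOn ρ (⨅ i ∈ F, (Δ.map (ρ i)).comap (ρ i)) := by
  intro x hx
  have hxΔ : ∀ i ∈ F, x i ∈ Δ.map (ρ i) := fun i hi => by
    obtain ⟨g, hg, hgx⟩ := hx i
    exact hgx ▸ Subgroup.mem_iInf.mp (Subgroup.mem_iInf.mp hg i) hi
  obtain ⟨g, hg⟩ := hu x (fun i => (hx i).imp fun g hg => hg.2) fun i hi => by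
    obtain ⟨d, hd, hdx⟩ := hxΔ i hi
    exact hdx ▸ hΔ d hd i hi
  have hgx : ∀ i, ρ i g = x i := fun i => congrFun hg i
  refine ⟨g, Subgroup.mem_iInf.mpr fun i => Subgroup.mem_iInf.mpr fun hi => ?_, hgx⟩
  rw [Subgroup.mem_comap, hgx i]
  exact hxΔ i hi

end Independence

theorem stmt_2_general {Γ : Type*} [Group Γ] [TopologicalSpace Γ] [IsTopologicalGroup Γ]
    [CompactSpace Γ] [TotallyDisconnectedSpace Γ]
    {I : Type*} {G : I → Type*} [∀ i, Group (G i)] [∀ i, TopologicalSpace (G i)]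
    [∀ i, IsTopologicalGroup (G i)] [∀ i, T2Space (G i)]
    (ρ : ∀ i, Γ →* G i) (hcont : ∀ i, Continuous (ρ i))
    (hfin : ((MonoidHom.pi ρ).range.relIndex
      (Subgroup.pi Set.univ fun i => (ρ i).range)) ≠ 0) :
    ∃ Γ' : Subgroup Γ, IsOpen (Γ' : Set Γ) ∧
      ∀ x : ∀ i, G i, (∀ i, ∃ g ∈ Γ', ρ i g = x i) →
        ∃ g ∈ Γ', ∀ i, ρ i g = x i := by
  have hρ : Continuous (MonoidHom.pi ρ) := continuous_pi hcont
  have hclosed : IsClosed ((MonoidHom.pi ρ).range : Set (∀ i, G i)) := by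
    rw [MonoidHom.coe_range]
    exact (isCompact_range hρ).isClosed
  obtain ⟨V, hV, hVsub⟩ :=
    Subgroup.exists_mem_nhds_one_inter_subset_of_isClosed_of_relIndex_ne_zero hclosed hfin
  rw [nhds_pi, Filter.mem_pi'] at hV
  obtain ⟨F, u, hu, hFuV⟩ := hV
  have hbox : MonoidHom.pi ρ ⁻¹' (F : Set I).pi u ∈ 𝓝 1 :=
    hρ.continuousAt.preimage_mem_nhds <| by
      rw [map_one]
      exact set_pi_mem_nhds F.finite_toSet fun i _ => hu i
  obtain ⟨Δ, hΔ⟩ := ProfiniteGrp.exists_openSubgroup_subset_of_mem_nhds_one hbox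
  refine ⟨_, Subgroup.isOpen_mono (le_iInf₂ fun i _ => Subgroup.le_comap_map (ρ i) Δ) Δ.isOpen,
    independentOn_iInf_comap_map (fun g hg => hΔ hg) fun x hxρ hxu => hVsub ⟨hFuV hxu, ?_⟩⟩
  exact (Subgroup.mem_pi _).mpr fun i _ => hxρ i

/-- (RO) ⟹ (PR): if the image of a profinite group `Γ` under `ρ = (ρ_i)` has finite
index in `∏ ρ_i(Γ)`, then the `ρ_i` are independent on some open subgroup of `Γ`. -/
theorem stmt_2 {Γ : Type*} [Group Γ] [TopologicalSpace Γ] [IsTopologicalGroup Γ]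
    [CompactSpace Γ] [T2Space Γ] [TotallyDisconnectedSpace Γ]
    {I : Type*} {G : I → Type*} [∀ i, Group (G i)] [∀ i, TopologicalSpace (G i)]
    [∀ i, IsTopologicalGroup (G i)] [∀ i, T2Space (G i)]
    (ρ : ∀ i, Γ →* G i) (hcont : ∀ i, Continuous (ρ i))
    (hfin : ((MonoidHom.pi ρ).range.relIndex
      (Subgroup.pi Set.univ fun i => (ρ i).range)) ≠ 0) :
    ∃ Γ' : Subgroup Γ, IsOpen (Γ' : Set Γ) ∧
      ∀ x : ∀ i, G i, (∀ i, ∃ g ∈ Γ', ρ i g = x i) →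
        ∃ g ∈ Γ', ∀ i, ρ i g = x i :=
  stmt_2_general ρ hcont hfin
end

section
/- Let Γ be a profinite group, and let ρ₁ : Γ → G₁, ρ₂ : Γ → G₂ be continuous surjective homomorphisms onto profinite groups. Suppose no finite simple group is simultaneously a continuous quotient of G₁ and a continuous quotient of G₂. Then the map (ρ₁, ρ₂) : Γ → G₁ × G₂ is surjective. -/
/-!
If `(ρ₁, ρ₂)` is not surjective, its image `H` is compact, hence closed, so `H N ≠ G₁ × G₂` for
some open normal subgroup `N`, and then also for `N₁ × N₂ ≤ N` with `Nᵢ` open normal in `Gᵢ`.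
The image of `Γ` in the finite group `G₁/N₁ × G₂/N₂` is thus a proper subgroup projecting onto both
factors. By Goursat's lemma it is the preimage of the graph of an isomorphism
`(G₁/N₁)/M₁ ≃ (G₂/N₂)/M₂`, and properness forces `M₁` to be proper. Any simple quotient of this nontrivial finite group is then
a common continuous quotient of `G₁` and `G₂`.
-/

open Function

universe u v

section SimpleQuotient

variable {G : Type u} [Group G]

theorem QuotientGroup.isSimpleGroup_of_maximal_normal {M : Subgroup G} [M.Normal]
    (hM : Maximal (fun N : Subgroup G => N.Normal ∧ N ≠ ⊤) M) : IsSimpleGroup (G ⧸ M) := by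
  have : Nontrivial (G ⧸ M) := QuotientGroup.nontrivial_iff.mpr hM.prop.2
  refine ⟨fun K hK => ?_⟩
  have hle : M ≤ K.comap (mk' M) := (ker_mk' M).ge.trans ((mk' M).ker_le_comap K)
  rw [← Subgroup.map_comap_eq_self_of_surjective (mk'_surjective M) K]
  by_cases htop : K.comap (mk' M) = ⊤
  · exact .inr (htop ▸ Subgroup.map_top_of_surjective _ (mk'_surjective M))
  · exact .inl (by rw [← hM.eq_of_le ⟨hK.comap _, htop⟩ hle, map_mk'_self])

theorem exists_surjective_isSimpleGroup_of_finite (G : Type u) [Group G] [Finite G]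
    [Nontrivial G] :
    ∃ (S : Type) (_ : Group S) (_ : Finite S), IsSimpleGroup S ∧ ∃ f : G →* S, Surjective f := by
  obtain ⟨M, hM⟩ := (Set.toFinite {N : Subgroup G | N.Normal ∧ N ≠ ⊤}).exists_maximal
    ⟨⊥, Subgroup.normal_bot, bot_ne_top⟩
  have := hM.prop.1
  have := QuotientGroup.isSimpleGroup_of_maximal_normal hM
  let e : Shrink.{0} (G ⧸ M) ≃* G ⧸ M := Shrink.mulEquiv
  exact ⟨Shrink.{0} (G ⧸ M), inferInstance, .of_equiv _ e.symm.toEquiv, e.isSimpleGroup,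
    e.symm.toMonoidHom.comp (QuotientGroup.mk' M),
    e.symm.surjective.comp (QuotientGroup.mk'_surjective M)⟩

end SimpleQuotient

section Goursat

variable {A : Type u} {B : Type v} [Group A] [Group B]

theorem Subgroup.eq_top_of_goursatFst_eq_top {I : Subgroup (A × B)}
    (hI₂ : Surjective (Prod.snd ∘ I.subtype)) (h : I.goursatFst = ⊤) : I = ⊤ := by
  refine (eq_top_iff' _).mpr fun x => ?_
  obtain ⟨⟨y, hy⟩, hyx⟩ := hI₂ x.2
  have hx₁ : (x.1 * y.1⁻¹, (1 : B)) ∈ I := mem_goursatFst.mp (h ▸ mem_top _)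
  have hx : x = (x.1 * y.1⁻¹, 1) * y := Prod.ext (by simp) (by simpa using hyx.symm)
  exact hx ▸ mul_mem hx₁ hy

theorem MonoidHom.exists_nontrivial_common_quotient {Γ : Type*} [Group Γ]
    (ψ₁ : Γ →* A) (ψ₂ : Γ →* B) (h₁ : Surjective ψ₁) (h₂ : Surjective ψ₂)
    (h : ¬ Surjective (ψ₁.prod ψ₂)) :
    ∃ (C : Type u) (_ : Group C), Nontrivial C ∧
      ∃ (f : A →* C) (g : B →* C), Surjective f ∧ Surjective g := by
  set I := (ψ₁.prod ψ₂).range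
  have hI₁ : Surjective (Prod.fst ∘ I.subtype) := fun a =>
    let ⟨γ, hγ⟩ := h₁ a; ⟨⟨_, γ, rfl⟩, hγ⟩
  have hI₂ : Surjective (Prod.snd ∘ I.subtype) := fun b =>
    let ⟨γ, hγ⟩ := h₂ b; ⟨⟨_, γ, rfl⟩, hγ⟩
  have hI : I.goursatFst ≠ ⊤ :=
    mt (Subgroup.eq_top_of_goursatFst_eq_top hI₂) (mt range_eq_top.mp h)
  have := Subgroup.normal_goursatFst hI₁
  have := Subgroup.normal_goursatSnd hI₂
  obtain ⟨e, -⟩ := Subgroup.goursat_surjective hI₁ hI₂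
  exact ⟨A ⧸ I.goursatFst, inferInstance, QuotientGroup.nontrivial_iff.mpr hI,
    QuotientGroup.mk' _, e.symm.toMonoidHom.comp (QuotientGroup.mk' _),
    QuotientGroup.mk'_surjective _, e.symm.surjective.comp (QuotientGroup.mk'_surjective _)⟩

end Goursat

section OpenQuotient

variable (G : Type u) [Group G] [TopologicalSpace G]

def IsOpenQuotient (S : Type v) [Group S] : Prop :=
  ∃ f : G →* S, Surjective f ∧ IsOpen (f.ker : Set G)

variable {G}

theorem isOpenQuotient_quotient (N : Subgroup G) [N.Normal] (hN : IsOpen (N : Set G)) :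
    IsOpenQuotient G (G ⧸ N) :=
  ⟨QuotientGroup.mk' N, QuotientGroup.mk'_surjective N, by rwa [QuotientGroup.ker_mk']⟩

theorem IsOpenQuotient.comp [SeparatelyContinuousMul G] {C S : Type*} [Group C] [Group S]
    (h : IsOpenQuotient G C) (g : C →* S) (hg : Surjective g) : IsOpenQuotient G S := by
  obtain ⟨f, hf, hker⟩ := h
  exact ⟨g.comp f, hg.comp hf,
    Subgroup.isOpen_mono (MonoidHom.comap_ker g f ▸ f.ker_le_comap g.ker) hker⟩

end OpenQuotient

theorem Subgroup.eq_top_of_isClosed_of_forall_sup_eq_top {G : Type u} [Group G]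
    [TopologicalSpace G] [IsTopologicalGroup G] [CompactSpace G] [TotallyDisconnectedSpace G]
    {H : Subgroup G} (hH : IsClosed (H : Set G))
    (h : ∀ N : Subgroup G, N.Normal → IsOpen (N : Set G) → H ⊔ N = ⊤) : H = ⊤ := by
  refine (eq_top_iff' _).mpr fun x => ?_
  by_contra hx
  obtain ⟨N, hN⟩ := ProfiniteGrp.exist_openNormalSubgroup_sub_open_nhds_of_one
    (hH.isOpen_compl.preimage (continuous_const_mul x)) (by simpa using hx)
  have hxN : x ∈ ((H ⊔ N.toSubgroup : Subgroup G) : Set G) := by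
    rw [h _ N.isNormal' N.toOpenSubgroup.isOpen]; trivial
  rw [Subgroup.mul_normal] at hxN
  obtain ⟨y, hy, n, hn, rfl⟩ := hxN
  exact hN (inv_mem hn) (by simpa using hy)

theorem Subgroup.prod_comap_inl_comap_inr_le {A B : Type*} [Group A] [Group B]
    (N : Subgroup (A × B)) :
    (N.comap (MonoidHom.inl A B)).prod (N.comap (MonoidHom.inr A B)) ≤ N :=
  prod_le_iff.mpr ⟨map_comap_le _ _, map_comap_le _ _⟩

theorem exists_isSimpleGroup_isOpenQuotient_of_sup_ne_top {Γ G₁ G₂ : Type*} [Group Γ]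
    [Group G₁] [TopologicalSpace G₁] [IsTopologicalGroup G₁] [CompactSpace G₁]
    [Group G₂] [TopologicalSpace G₂] [IsTopologicalGroup G₂]
    {ρ₁ : Γ →* G₁} {ρ₂ : Γ →* G₂} (hs₁ : Surjective ρ₁) (hs₂ : Surjective ρ₂)
    {N₁ : Subgroup G₁} {N₂ : Subgroup G₂} [N₁.Normal] [N₂.Normal]
    (hN₁ : IsOpen (N₁ : Set G₁)) (hN₂ : IsOpen (N₂ : Set G₂))
    (h : (ρ₁.prod ρ₂).range ⊔ N₁.prod N₂ ≠ ⊤) :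
    ∃ (S : Type) (_ : Group S) (_ : Finite S), IsSimpleGroup S ∧
      IsOpenQuotient G₁ S ∧ IsOpenQuotient G₂ S := by
  have : Finite (G₁ ⧸ N₁) := N₁.quotient_finite_of_isOpen hN₁
  set ψ₁ := (QuotientGroup.mk' N₁).comp ρ₁
  set ψ₂ := (QuotientGroup.mk' N₂).comp ρ₂
  have hprod : ψ₁.prod ψ₂ =
      ((QuotientGroup.mk' N₁).prodMap (QuotientGroup.mk' N₂)).comp (ρ₁.prod ρ₂) := rfl
  have hψ : ¬ Surjective (ψ₁.prod ψ₂) := by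
    rw [← MonoidHom.range_eq_top, hprod, MonoidHom.range_comp]
    contrapose! h
    rw [← QuotientGroup.ker_mk' N₁, ← QuotientGroup.ker_mk' N₂, ← MonoidHom.ker_prodMap,
      ← Subgroup.comap_map_eq, h, Subgroup.comap_top]
  obtain ⟨C, _, _, f, g, hf, hg⟩ := ψ₁.exists_nontrivial_common_quotient ψ₂
    ((QuotientGroup.mk'_surjective N₁).comp hs₁) ((QuotientGroup.mk'_surjective N₂).comp hs₂) hψ
  have : Finite C := .of_surjective f hf
  obtain ⟨S, iS, hfin, hS, s, hs⟩ := exists_surjective_isSimpleGroup_of_finite C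
  exact ⟨S, iS, hfin, hS, (isOpenQuotient_quotient N₁ hN₁).comp (s.comp f) (hs.comp hf),
    (isOpenQuotient_quotient N₂ hN₂).comp (s.comp g) (hs.comp hg)⟩

theorem stmt_3_general {Γ G₁ G₂ : Type*} [Group Γ] [TopologicalSpace Γ]
    [CompactSpace Γ]
    [Group G₁] [TopologicalSpace G₁] [IsTopologicalGroup G₁]
    [CompactSpace G₁] [T2Space G₁] [TotallyDisconnectedSpace G₁]
    [Group G₂] [TopologicalSpace G₂] [IsTopologicalGroup G₂]
    [CompactSpace G₂] [T2Space G₂] [TotallyDisconnectedSpace G₂]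
    (ρ₁ : Γ →* G₁) (ρ₂ : Γ →* G₂) (h₁ : Continuous ρ₁) (h₂ : Continuous ρ₂)
    (hs₁ : Function.Surjective ρ₁) (hs₂ : Function.Surjective ρ₂)
    (hD : ¬ ∃ (S : Type) (_ : Group S) (_ : Finite S), IsSimpleGroup S ∧
      (∃ f₁ : G₁ →* S, Function.Surjective f₁ ∧ IsOpen (f₁.ker : Set G₁)) ∧
      (∃ f₂ : G₂ →* S, Function.Surjective f₂ ∧ IsOpen (f₂.ker : Set G₂))) :
    Function.Surjective (fun γ => (ρ₁ γ, ρ₂ γ) : Γ → G₁ × G₂) := by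
  have hclosed : IsClosed ((ρ₁.prod ρ₂).range : Set (G₁ × G₂)) := by
    rw [MonoidHom.coe_range]
    exact (isCompact_range (h₁.prodMk h₂)).isClosed
  refine MonoidHom.range_eq_top.mp (Subgroup.eq_top_of_isClosed_of_forall_sup_eq_top hclosed
    fun N _ hN => ?_)
  refine eq_top_mono (sup_le_sup_left N.prod_comap_inl_comap_inr_le _) ?_
  by_contra h
  obtain ⟨S, iS, hfin, hS, hS₁, hS₂⟩ := exists_isSimpleGroup_isOpenQuotient_of_sup_ne_top hs₁ hs₂
    (hN.preimage (continuous_id.prodMk continuous_const))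
    (hN.preimage (continuous_const.prodMk continuous_id)) h
  exact hD ⟨S, iS, hfin, hS, hS₁, hS₂⟩

/-- Case |I| = 2 of Serre's Lemma 2: if no finite simple group is a common continuous
quotient of `G₁` and `G₂`, then `(ρ₁, ρ₂)` is surjective. -/
theorem stmt_3 {Γ G₁ G₂ : Type*} [Group Γ] [TopologicalSpace Γ] [IsTopologicalGroup Γ]
    [CompactSpace Γ] [T2Space Γ] [TotallyDisconnectedSpace Γ]
    [Group G₁] [TopologicalSpace G₁] [IsTopologicalGroup G₁]
    [CompactSpace G₁] [T2Space G₁] [TotallyDisconnectedSpace G₁]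
    [Group G₂] [TopologicalSpace G₂] [IsTopologicalGroup G₂]
    [CompactSpace G₂] [T2Space G₂] [TotallyDisconnectedSpace G₂]
    (ρ₁ : Γ →* G₁) (ρ₂ : Γ →* G₂) (h₁ : Continuous ρ₁) (h₂ : Continuous ρ₂)
    (hs₁ : Function.Surjective ρ₁) (hs₂ : Function.Surjective ρ₂)
    (hD : ¬ ∃ (S : Type) (_ : Group S) (_ : Finite S), IsSimpleGroup S ∧
      (∃ f₁ : G₁ →* S, Function.Surjective f₁ ∧ IsOpen (f₁.ker : Set G₁)) ∧
      (∃ f₂ : G₂ →* S, Function.Surjective f₂ ∧ IsOpen (f₂.ker : Set G₂))) :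
    Function.Surjective (fun γ => (ρ₁ γ, ρ₂ γ) : Γ → G₁ × G₂) :=
  stmt_3_general ρ₁ ρ₂ h₁ h₂ hs₁ hs₂ hD
end

section
/- Let H be a finite group, I a normal subgroup, G = H/I the quotient, and suppose |G| is prime to a prime p. Let P be a p-Sylow subgroup of I that is also a p-Sylow subgroup of H. Then G is isomorphic to a quotient of a subgroup H' of H with |H'| prime to p. -/
/-!
By the Frattini argument `H = I · N_H(P)`. Since `P` is a normal Hall subgroup of `N_H(P)`,
Schur–Zassenhaus gives a complement `H'` of `P` in `N_H(P)`; its order is the index of `P`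
in `N_H(P)`, hence prime to `p`, and `H = I · P · H' = I · H'`, so `H'` maps onto `H ⧸ I`.
-/

open Subgroup

theorem QuotientGroup.mk'_comp_subtype_surjective_of_sup_eq_top {G : Type*} [Group G]
    {N K : Subgroup G} [N.Normal] (h : N ⊔ K = ⊤) :
    Function.Surjective ((QuotientGroup.mk' N).comp K.subtype) := by
  rw [← MonoidHom.range_eq_top, MonoidHom.range_comp, range_subtype,
    ← map_top_of_surjective _ (QuotientGroup.mk'_surjective N), ← h, Subgroup.map_sup,
    QuotientGroup.map_mk'_self, bot_sup_eq]

theorem Subgroup.exists_sup_eq_of_coprime_relIndex {G : Type*} [Group G] {N M : Subgroup G}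
    (hNM : N ≤ M) [(N.subgroupOf M).Normal] (hN : (Nat.card N).Coprime (N.relIndex M)) :
    ∃ K ≤ M, Nat.card K = N.relIndex M ∧ N ⊔ K = M := by
  have hcard : Nat.card (N.subgroupOf M) = Nat.card N :=
    Nat.card_congr (subgroupOfEquivOfLe hNM).toEquiv
  obtain ⟨K, hK⟩ := exists_right_complement'_of_coprime (N := N.subgroupOf M) (hcard ▸ hN)
  refine ⟨K.map M.subtype, map_subtype_le K, ?_, ?_⟩
  · rw [Nat.card_congr (equivMapOfInjective K M.subtype M.subtype_injective).toEquiv.symm,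
      ← hK.symm.index_eq_card, relIndex]
  · simpa only [Subgroup.map_sup, subgroupOf_map_subtype, inf_of_le_left hNM, ← MonoidHom.range_eq_map,
      range_subtype] using congrArg (map M.subtype) hK.sup_eq_top

theorem Sylow.exists_sup_eq_normalizer {G : Type*} [Group G] [Finite G] {p : ℕ} [Fact p.Prime]
    (P : Sylow p G) :
    ∃ K : Subgroup G, ¬ p ∣ Nat.card K ∧ (P : Subgroup G) ⊔ K = normalizer (P : Set G) := by
  have hP : (P : Subgroup G) ≤ normalizer (P : Set G) := le_normalizer
  have : ((P : Subgroup G).subgroupOf (normalizer (P : Set G))).Normal := normal_in_normalizer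
  have hidx : ¬ p ∣ (P : Subgroup G).relIndex (normalizer (P : Set G)) :=
    fun h ↦ P.not_dvd_index (h.trans (relIndex_dvd_index_of_le hP))
  obtain ⟨K, -, hK, hsup⟩ := exists_sup_eq_of_coprime_relIndex hP
    (P.card_coprime_index.coprime_dvd_right (relIndex_dvd_index_of_le hP))
  exact ⟨K, hK ▸ hidx, hsup⟩

theorem stmt_9_general (H : Type*) [Group H] [Finite H] (I : Subgroup H) [I.Normal]
    (p : ℕ) (hp : p.Prime)
    (P : Sylow p H) (hPI : (P : Subgroup H) ≤ I) :
    ∃ H' : Subgroup H, ¬ p ∣ Nat.card H' ∧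
      ∃ f : H' →* H ⧸ I, Function.Surjective f := by
  have : Fact p.Prime := ⟨hp⟩
  obtain ⟨K, hK, hPK⟩ := P.exists_sup_eq_normalizer
  have hIK : I ⊔ K = ⊤ := by
    rw [← sup_of_le_left hPI, sup_assoc, hPK, sup_comm]
    exact P.normalizer_sup_eq_top' hPI
  exact ⟨K, hK, _, QuotientGroup.mk'_comp_subtype_surjective_of_sup_eq_top hIK⟩

/-- Step 5.2.3 of Serre's Theorem 3′: if `G = H ⧸ I` has order prime to `p` and `P` is a
`p`-Sylow subgroup of `H` contained in `I`, then `G` is a quotient of a subgroup `H'`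
of `H` of order prime to `p`. -/
theorem stmt_9 (H : Type*) [Group H] [Finite H] (I : Subgroup H) [I.Normal]
    (p : ℕ) (hp : p.Prime) (hG : ¬ p ∣ Nat.card (H ⧸ I))
    (P : Sylow p H) (hPI : (P : Subgroup H) ≤ I) :
    ∃ H' : Subgroup H, ¬ p ∣ Nat.card H' ∧
      ∃ f : H' →* H ⧸ I, Function.Surjective f :=
  stmt_9_general H I p hp P hPI
end

section
/- Let H be a finite simple group that is a (closed) sub-quotient of GL_n(ℤ_ℓ) with ℓ dividing |H|. Then H is either cyclic of order ℓ or isomorphic to a sub-quotient of GL_n(𝔽_ℓ). -/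
open Filter Topology Finset

namespace Stmt12Aux

variable {p : ℕ} [hp : Fact p.Prime] {n : ℕ}

lemma dvd_mul_entries {j j' : ℕ} {x y : Matrix (Fin n) (Fin n) ℤ_[p]}
    (hx : ∀ i k, (p : ℤ_[p]) ^ j ∣ x i k) (hy : ∀ i k, (p : ℤ_[p]) ^ j' ∣ y i k) :
    ∀ i k, (p : ℤ_[p]) ^ (j + j') ∣ (x * y) i k := by
  intro i k
  rw [Matrix.mul_apply, pow_add]
  exact Finset.dvd_sum fun l _ => mul_dvd_mul (hx i l) (hy l k)

lemma dvd_pow_entries {j : ℕ} {x : Matrix (Fin n) (Fin n) ℤ_[p]}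
    (hx : ∀ i k, (p : ℤ_[p]) ^ j ∣ x i k) :
    ∀ m : ℕ, 1 ≤ m → ∀ i k, (p : ℤ_[p]) ^ (j * m) ∣ (x ^ m) i k := by
  intro m
  induction m with
  | zero => omega
  | succ m ih =>
    intro _
    rcases Nat.eq_zero_or_pos m with rfl | hm'
    · simpa using hx
    · have h2 := dvd_mul_entries (x := x ^ m) (y := x) (ih hm') hx
      simpa [pow_succ, Nat.mul_succ] using h2

lemma step {j : ℕ} (hj : 1 ≤ j) {a : Matrix (Fin n) (Fin n) ℤ_[p]}
    (ha : ∀ i k, (p : ℤ_[p]) ^ j ∣ a i k) :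
    ∀ i k, (p : ℤ_[p]) ^ (j + 1) ∣ ((1 + a) ^ p - 1) i k := by
  intro i k
  have hcomm : Commute a (1 : Matrix (Fin n) (Fin n) ℤ_[p]) := Commute.one_right a
  have hexp : (1 + a) ^ p - 1
      = ∑ m ∈ range p, a ^ (m + 1) * 1 ^ (p - (m + 1)) * (p.choose (m + 1) : Matrix (Fin n) (Fin n) ℤ_[p]) := by
    rw [add_comm, hcomm.add_pow p, Finset.sum_range_succ']
    simp
  rw [hexp, Matrix.sum_apply]
  refine Finset.dvd_sum fun m _ => ?_
  have hentry : ∀ (x : Matrix (Fin n) (Fin n) ℤ_[p]) (c : ℕ) (i' k'),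
      (x * (c : Matrix (Fin n) (Fin n) ℤ_[p])) i' k' = (c : ℤ_[p]) * x i' k' := by
    intro x c i' k'
    have h1 : (c : Matrix (Fin n) (Fin n) ℤ_[p]) = c • (1 : Matrix (Fin n) (Fin n) ℤ_[p]) := by
      simp
    rw [h1, mul_smul_comm, mul_one, Matrix.smul_apply, nsmul_eq_mul]
  rcases Nat.eq_zero_or_pos m with rfl | hm
  · -- term a^1 * 1 * (choose p 1)
    rw [one_pow, mul_one, hentry, pow_one, Nat.choose_one_right, pow_succ']
    exact mul_dvd_mul (dvd_refl _) (ha i k)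
  · have h1 : ∀ i' k', (p : ℤ_[p]) ^ (j * (m + 1)) ∣ (a ^ (m + 1)) i' k' :=
      dvd_pow_entries ha (m + 1) (Nat.le_add_left 1 m)
    have hle : j + 1 ≤ j * (m + 1) := by nlinarith
    have h2 : ∀ i' k', (p : ℤ_[p]) ^ (j + 1) ∣ (a ^ (m + 1)) i' k' := fun i' k' =>
      (pow_dvd_pow _ hle).trans (h1 i' k')
    rw [one_pow, mul_one, hentry]
    exact (h2 i k).mul_left _


lemma iter {v : Matrix (Fin n) (Fin n) ℤ_[p]}
    (hv : ∀ i k, (p : ℤ_[p]) ^ 1 ∣ (v - 1) i k) (m : ℕ) :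
    ∀ i k, (p : ℤ_[p]) ^ (m + 1) ∣ (v ^ p ^ m - 1) i k := by
  induction m with
  | zero => simpa using hv
  | succ m ih =>
    have h := step (Nat.le_add_left 1 m) ih
    have hrw : (1 + (v ^ p ^ m - 1)) ^ p = v ^ p ^ (m + 1) := by
      rw [add_comm, sub_add_cancel, ← pow_mul, ← pow_succ]
    simpa [← pow_mul, pow_succ] using h

lemma tendsto_matrix_pow {v : Matrix (Fin n) (Fin n) ℤ_[p]}
    (hv : ∀ i k, (p : ℤ_[p]) ^ 1 ∣ (v - 1) i k) :
    Tendsto (fun m => v ^ p ^ m) atTop (𝓝 1) := by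
  have hp1 : (1 : ℝ) < p := by exact_mod_cast hp.out.one_lt
  apply tendsto_pi_nhds.mpr
  intro i
  apply tendsto_pi_nhds.mpr
  intro k
  have hb : ∀ m : ℕ, ‖(v ^ p ^ m) i k - (1 : Matrix (Fin n) (Fin n) ℤ_[p]) i k‖
      ≤ ((p : ℝ)⁻¹) ^ (m + 1) := by
    intro m
    have h1 := (PadicInt.norm_le_pow_iff_mem_span_pow ((v ^ p ^ m - 1) i k) (m + 1)).mpr
      (Ideal.mem_span_singleton.mpr (iter hv m i k))
    rw [zpow_neg, zpow_natCast] at h1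
    simpa [Matrix.sub_apply, inv_pow] using h1
  have hlim : Tendsto (fun m : ℕ => ((p : ℝ)⁻¹) ^ (m + 1)) atTop (𝓝 0) :=
    (tendsto_pow_atTop_nhds_zero_of_lt_one (by positivity)
      (inv_lt_one_of_one_lt₀ hp1)).comp (tendsto_add_atTop_nat 1)
  refine tendsto_iff_dist_tendsto_zero.mpr ?_
  exact squeeze_zero (fun m => dist_nonneg) (fun m => by rw [dist_eq_norm]; exact hb m) hlim

lemma ker_entries {w : GL (Fin n) ℤ_[p]}
    (hw : Matrix.GeneralLinearGroup.map (PadicInt.toZMod (p := p)) w = 1) :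
    ∀ i k, (p : ℤ_[p]) ^ 1 ∣ ((w : Matrix (Fin n) (Fin n) ℤ_[p]) - 1) i k := by
  intro i k
  have h1 : (RingHom.mapMatrix (PadicInt.toZMod (p := p))) (w : Matrix (Fin n) (Fin n) ℤ_[p])
      = (1 : Matrix (Fin n) (Fin n) (ZMod p)) := congrArg Units.val hw
  have h2 : PadicInt.toZMod ((w : Matrix (Fin n) (Fin n) ℤ_[p]) i k)
      = (1 : Matrix (Fin n) (Fin n) (ZMod p)) i k := by
    rw [← h1]; rfl
  have h3 : PadicInt.toZMod (((w : Matrix (Fin n) (Fin n) ℤ_[p]) - 1) i k) = 0 := by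
    rw [Matrix.sub_apply, map_sub, h2, Matrix.one_apply, Matrix.one_apply]
    split <;> simp
  have h4 : ((w : Matrix (Fin n) (Fin n) ℤ_[p]) - 1) i k ∈ Ideal.span {(p : ℤ_[p])} := by
    rw [← PadicInt.maximalIdeal_eq_span_p, ← PadicInt.ker_toZMod, RingHom.mem_ker]
    exact h3
  simpa using Ideal.mem_span_singleton.mp h4

lemma tendsto_units_pow {u : GL (Fin n) ℤ_[p]}
    (hu : Matrix.GeneralLinearGroup.map (PadicInt.toZMod (p := p)) u = 1) :
    Tendsto (fun m => u ^ p ^ m) atTop (𝓝 1) := by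
  have hu' : Matrix.GeneralLinearGroup.map (PadicInt.toZMod (p := p)) u⁻¹ = 1 := by
    rw [map_inv, hu, inv_one]
  have h1 : Tendsto (fun m => ((u : Matrix (Fin n) (Fin n) ℤ_[p])) ^ p ^ m) atTop (𝓝 1) :=
    tendsto_matrix_pow (ker_entries hu)
  have h2 : Tendsto (fun m => ((u⁻¹ : GL (Fin n) ℤ_[p]) : Matrix (Fin n) (Fin n) ℤ_[p]) ^ p ^ m)
      atTop (𝓝 1) := tendsto_matrix_pow (ker_entries hu')
  rw [Units.isInducing_embedProduct.tendsto_nhds_iff]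
  have hemb : ∀ m : ℕ, Units.embedProduct _ (u ^ p ^ m)
      = (((u : Matrix (Fin n) (Fin n) ℤ_[p])) ^ p ^ m,
        MulOpposite.op (((u⁻¹ : GL (Fin n) ℤ_[p]) : Matrix (Fin n) (Fin n) ℤ_[p]) ^ p ^ m)) := by
    intro m
    simp [Units.embedProduct, ← inv_pow]
  simp only [Function.comp_def, hemb]
  have hone : (Units.embedProduct (Matrix (Fin n) (Fin n) ℤ_[p])) 1
      = ((1 : Matrix (Fin n) (Fin n) ℤ_[p]), MulOpposite.op 1) := by
    rfl
  rw [hone]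
  exact h1.prodMk_nhds ((MulOpposite.continuous_op.tendsto 1).comp h2)

end Stmt12Aux

/-- From the proof of Serre's Theorem 4: a finite simple group `H` which is a closed
sub-quotient of `GL_n(ℤ_ℓ)` and whose order is divisible by `ℓ` is either cyclic of
order `ℓ` or a sub-quotient of `GL_n(𝔽_ℓ)`. -/
theorem stmt_12 (n : ℕ) (ℓ : ℕ) [Fact ℓ.Prime]
    (H : Type*) [Group H] [Finite H] [IsSimpleGroup H]
    (hsub : ∃ (K : Subgroup (Matrix.GeneralLinearGroup (Fin n) ℤ_[ℓ]))
      (_ : IsClosed (K : Set (Matrix.GeneralLinearGroup (Fin n) ℤ_[ℓ])))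
      (N : Subgroup K) (_ : N.Normal) (_ : IsClosed (N : Set K)),
      Nonempty (H ≃* K ⧸ N))
    (hdvd : ℓ ∣ Nat.card H) :
    (IsCyclic H ∧ Nat.card H = ℓ) ∨
    ∃ (K : Subgroup (Matrix.GeneralLinearGroup (Fin n) (ZMod ℓ)))
      (N : Subgroup K) (_ : N.Normal), Nonempty (H ≃* K ⧸ N) := by

  classical
  obtain ⟨K, hKclosed, N, hN, hNclosed, ⟨e⟩⟩ := hsub
  haveI := hN
  set g : K →* Matrix.GeneralLinearGroup (Fin n) (ZMod ℓ) :=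
    (Matrix.GeneralLinearGroup.map (PadicInt.toZMod (p := ℓ))).comp K.subtype with hg
  haveI : Finite (K ⧸ N) := Finite.of_equiv H e.toEquiv
  haveI : Nontrivial (K ⧸ N) := e.toEquiv.symm.nontrivial
  haveI : IsSimpleGroup (K ⧸ N) :=
    IsSimpleGroup.isSimpleGroup_of_surjective e.toMonoidHom e.surjective
  have hWn : (g.ker.map (QuotientGroup.mk' N)).Normal :=
    Subgroup.Normal.map inferInstance (QuotientGroup.mk' N) (QuotientGroup.mk'_surjective N)
  rcases hWn.eq_bot_or_eq_top with hbot | htop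
  · -- W ≤ N : H is a subquotient of GL_n(F_ℓ)
    have hWN : g.ker ≤ N := by
      have h := (Subgroup.map_eq_bot_iff _).mp hbot
      rwa [QuotientGroup.ker_mk'] at h
    set φ := g.rangeRestrict with hφ
    have hle : N ≤ (N.map φ).comap φ := Subgroup.le_comap_map _ _
    haveI hN' : (N.map φ).Normal := hN.map φ g.rangeRestrict_surjective
    set ψ : K ⧸ N →* g.range ⧸ (N.map φ) := QuotientGroup.map N (N.map φ) φ hle with hψ
    have hsurj : Function.Surjective ψ := by
      intro x
      obtain ⟨z, rfl⟩ := QuotientGroup.mk'_surjective (N.map φ) x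
      obtain ⟨y, rfl⟩ := g.rangeRestrict_surjective z
      exact ⟨QuotientGroup.mk' N y, QuotientGroup.map_mk' N _ _ hle y⟩
    have hinj : Function.Injective ψ := by
      rw [injective_iff_map_eq_one]
      intro x hx
      obtain ⟨y, rfl⟩ := QuotientGroup.mk'_surjective N x
      rw [QuotientGroup.map_mk' N _ _ hle y] at hx
      have hmem : φ y ∈ N.map φ := (QuotientGroup.eq_one_iff _).mp hx
      obtain ⟨z, hzN, hz⟩ := hmem
      have hker : z⁻¹ * y ∈ g.ker := by
        have h1 : φ (z⁻¹ * y) = 1 := by rw [φ.map_mul, φ.map_inv, hz, inv_mul_cancel]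
        have h2 : z⁻¹ * y ∈ MonoidHom.ker φ := h1
        rwa [hφ, MonoidHom.ker_rangeRestrict] at h2
      have hyN : y ∈ N := by
        have h3 := N.mul_mem hzN (hWN hker)
        simpa [mul_inv_cancel_left] using h3
      exact (QuotientGroup.eq_one_iff y).mpr hyN
    exact Or.inr ⟨g.range, N.map φ, hN',
      ⟨e.trans (MulEquiv.ofBijective ψ ⟨hinj, hsurj⟩)⟩⟩
  · -- every element of K ⧸ N has ℓ-power order
    have hpow : ∀ x : K ⧸ N, ∃ m : ℕ, x ^ ℓ ^ m = 1 := by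
      intro x
      have hx : x ∈ g.ker.map (QuotientGroup.mk' N) := htop ▸ Subgroup.mem_top x
      obtain ⟨w, hw, rfl⟩ := hx
      have hw1 : Matrix.GeneralLinearGroup.map (PadicInt.toZMod (p := ℓ))
          (↑w : Matrix.GeneralLinearGroup (Fin n) ℤ_[ℓ]) = 1 := hw
      have ht : Tendsto (fun m => (↑w : Matrix.GeneralLinearGroup (Fin n) ℤ_[ℓ]) ^ ℓ ^ m)
          atTop (𝓝 1) := Stmt12Aux.tendsto_units_pow hw1
      have ht' : Tendsto (fun m => w ^ ℓ ^ m) atTop (𝓝 (1 : K)) := by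
        have hind : Topology.IsInducing
            (Subtype.val : K → Matrix.GeneralLinearGroup (Fin n) ℤ_[ℓ]) := ⟨rfl⟩
        rw [hind.tendsto_nhds_iff]
        simpa [Function.comp_def] using ht
      haveI : N.FiniteIndex := N.finiteIndex_of_finite_quotient
      have hNopen : IsOpen (N : Set K) := Subgroup.isOpen_of_isClosed_of_finiteIndex N hNclosed
      have hev : ∀ᶠ m in atTop, w ^ ℓ ^ m ∈ N := ht' (hNopen.mem_nhds N.one_mem)
      obtain ⟨m, hm⟩ := hev.exists
      refine ⟨m, ?_⟩
      rw [← map_pow]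
      exact (QuotientGroup.eq_one_iff _).mpr hm
    have hP : IsPGroup ℓ H := by
      intro h
      obtain ⟨m, hm⟩ := hpow (e h)
      exact ⟨m, e.injective (by rw [map_pow, hm, map_one])⟩
    have hZ : Subgroup.center H = ⊤ := by
      haveI hcnt := hP.center_nontrivial
      rcases Subgroup.Normal.eq_bot_or_eq_top
          (inferInstance : (Subgroup.center H).Normal) with h | h
      · exact absurd ((Subgroup.center H).nontrivial_iff_ne_bot.mp hcnt) (not_not_intro h)
      · exact h
    have hcard : Nat.card H = ℓ := by
      letI : CommGroup H := Group.commGroupOfCenterEqTop hZ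
      have hp' : (Nat.card H).Prime := IsSimpleGroup.prime_card
      exact ((Nat.prime_dvd_prime_iff_eq Fact.out hp').mp hdvd).symm
    exact Or.inl ⟨isCyclic_of_prime_card hcard, hcard⟩
end

section
/- Let Γ be a profinite group, ρ : Γ → ∏_{ℓ∈L} G_ℓ a continuous homomorphism into a product of profinite groups, and for each ℓ let A_ℓ be a closed normal subgroup of G_ℓ with A_ℓ ⊆ ρ(Γ) (viewing A_ℓ inside the ℓ-th factor). Suppose the composite Γ → ∏ G_ℓ → ∏ (G_ℓ/A_ℓ) is surjective. Then ρ is surjective onto ∏ G_ℓ. -/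
/-!
The image `ρ(Γ)` is compact, hence closed. It contains every finitely supported element of
`∏ A_ℓ` (a finite product of elements of the factors `A_ℓ`), and these are dense in `∏ A_ℓ`
for the product topology, so `∏ A_ℓ ⊆ ρ(Γ)`. Surjectivity onto `∏ G_ℓ / A_ℓ` says that
`ρ(Γ) · ∏ A_ℓ = ∏ G_ℓ`, hence `ρ(Γ) = ∏ G_ℓ`.
-/

open Filter Topology

section

variable {L : Type*} {G : L → Type*}

section

variable [DecidableEq L]

theorem Finset.tendsto_piecewise_one_atTop [∀ ℓ, One (G ℓ)] [∀ ℓ, TopologicalSpace (G ℓ)]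
    (a : ∀ ℓ, G ℓ) : Tendsto (fun I : Finset L => I.piecewise a 1) atTop (𝓝 a) := by
  refine tendsto_pi_nhds.mpr fun ℓ => tendsto_nhds_of_eventually_eq ?_
  filter_upwards [eventually_ge_atTop {ℓ}] with I hI
  exact I.piecewise_eq_of_mem _ _ (hI (Finset.mem_singleton_self ℓ))

theorem Finset.piecewise_one_mem [∀ ℓ, Monoid (G ℓ)] {S : Type*} [SetLike S (∀ ℓ, G ℓ)]
    [SubmonoidClass S (∀ ℓ, G ℓ)] {H : S} {a : ∀ ℓ, G ℓ} (I : Finset L)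
    (ha : ∀ ℓ ∈ I, Pi.mulSingle ℓ (a ℓ) ∈ H) : I.piecewise a 1 ∈ H := by
  induction I using Finset.induction with
  | empty => simp [one_mem H]
  | @insert j I hj ih =>
    have hsplit : (insert j I).piecewise a 1 = Pi.mulSingle j (a j) * I.piecewise a 1 := by
      ext ℓ
      rcases eq_or_ne ℓ j with rfl | hne
      · simp [hj]
      · simp [Finset.piecewise, hne]
    rw [hsplit]
    exact mul_mem (ha j (I.mem_insert_self j))
      (ih fun ℓ hℓ => ha ℓ (Finset.mem_insert_of_mem hℓ))

theorem Pi.mem_closure_of_mulSingle_mem [∀ ℓ, Monoid (G ℓ)] [∀ ℓ, TopologicalSpace (G ℓ)]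
    {S : Type*} [SetLike S (∀ ℓ, G ℓ)] [SubmonoidClass S (∀ ℓ, G ℓ)] {H : S} {a : ∀ ℓ, G ℓ}
    (ha : ∀ ℓ, Pi.mulSingle ℓ (a ℓ) ∈ H) : a ∈ closure (H : Set (∀ ℓ, G ℓ)) :=
  mem_closure_of_tendsto (Finset.tendsto_piecewise_one_atTop a)
    (Eventually.of_forall fun I => I.piecewise_one_mem fun ℓ _ => ha ℓ)

theorem Subgroup.pi_le_of_isClosed_of_mulSingle_mem [∀ ℓ, Group (G ℓ)]
    [∀ ℓ, TopologicalSpace (G ℓ)] {H : Subgroup (∀ ℓ, G ℓ)} (hH : IsClosed (H : Set (∀ ℓ, G ℓ)))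
    (A : ∀ ℓ, Subgroup (G ℓ))
    (hA : ∀ ℓ, ∀ a ∈ A ℓ, Pi.mulSingle ℓ a ∈ H) : Subgroup.pi Set.univ A ≤ H := fun a ha =>
  hH.closure_subset (Pi.mem_closure_of_mulSingle_mem fun ℓ => hA ℓ (a ℓ) (ha ℓ trivial))

end

theorem Subgroup.eq_top_of_pi_le_of_forall_exists_mk_eq [∀ ℓ, Group (G ℓ)]
    {H : Subgroup (∀ ℓ, G ℓ)} (A : ∀ ℓ, Subgroup (G ℓ)) (hA : Subgroup.pi Set.univ A ≤ H)
    (hH : ∀ x : ∀ ℓ, G ℓ, ∃ h ∈ H, ∀ ℓ, (h ℓ : G ℓ ⧸ A ℓ) = x ℓ) : H = ⊤ := by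
  refine eq_top_iff.mpr fun x _ => ?_
  obtain ⟨h, hmem, hx⟩ := hH x
  have hcorr : h⁻¹ * x ∈ Subgroup.pi Set.univ A := fun ℓ _ => QuotientGroup.eq.mp (hx ℓ)
  simpa using H.mul_mem hmem (hA hcorr)

end

theorem stmt_18_general {Γ : Type*} [Group Γ] [TopologicalSpace Γ]
    [CompactSpace Γ]
    {L : Type*} [DecidableEq L] {G : L → Type*} [∀ ℓ, Group (G ℓ)]
    [∀ ℓ, TopologicalSpace (G ℓ)] [∀ ℓ, T2Space (G ℓ)]
    (ρ : Γ →* ∀ ℓ, G ℓ) (hρ : Continuous ρ)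
    (A : ∀ ℓ, Subgroup (G ℓ))
    (hAsub : ∀ ℓ, ∀ a ∈ A ℓ, Pi.mulSingle ℓ a ∈ ρ.range)
    (hquot : Function.Surjective
      (fun γ ℓ => QuotientGroup.mk (ρ γ ℓ) : Γ → ∀ ℓ, G ℓ ⧸ A ℓ)) :
    Function.Surjective ρ := by
  have hclosed : IsClosed (ρ.range : Set (∀ ℓ, G ℓ)) := by
    simpa using (isCompact_range hρ).isClosed
  refine MonoidHom.range_eq_top.mp <| Subgroup.eq_top_of_pi_le_of_forall_exists_mk_eq A
    (Subgroup.pi_le_of_isClosed_of_mulSingle_mem hclosed A hAsub) fun x => ?_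
  obtain ⟨γ, hγ⟩ := hquot fun ℓ => x ℓ
  exact ⟨ρ γ, ⟨γ, rfl⟩, congrFun hγ⟩

/-- §8.5 of Serre's proof of Theorem 1: if `ρ : Γ → ∏ G_ℓ` has image containing each
`A_ℓ` (a closed normal subgroup of `G_ℓ`, viewed in the `ℓ`-th factor) and the composite
`Γ → ∏ G_ℓ → ∏ G_ℓ/A_ℓ` is surjective, then `ρ` is surjective. -/
theorem stmt_18 {Γ : Type*} [Group Γ] [TopologicalSpace Γ] [IsTopologicalGroup Γ]
    [CompactSpace Γ] [T2Space Γ] [TotallyDisconnectedSpace Γ]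
    {L : Type*} [DecidableEq L] {G : L → Type*} [∀ ℓ, Group (G ℓ)]
    [∀ ℓ, TopologicalSpace (G ℓ)] [∀ ℓ, IsTopologicalGroup (G ℓ)]
    [∀ ℓ, CompactSpace (G ℓ)] [∀ ℓ, T2Space (G ℓ)]
    [∀ ℓ, TotallyDisconnectedSpace (G ℓ)]
    (ρ : Γ →* ∀ ℓ, G ℓ) (hρ : Continuous ρ)
    (A : ∀ ℓ, Subgroup (G ℓ)) (hAnormal : ∀ ℓ, (A ℓ).Normal)
    (hAclosed : ∀ ℓ, IsClosed (A ℓ : Set (G ℓ)))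
    (hAsub : ∀ ℓ, ∀ a ∈ A ℓ, Pi.mulSingle ℓ a ∈ ρ.range)
    (hquot : Function.Surjective
      (fun γ ℓ => QuotientGroup.mk (ρ γ ℓ) : Γ → ∀ ℓ, G ℓ ⧸ A ℓ)) :
    Function.Surjective ρ :=
  stmt_18_general ρ hρ A hAsub hquot
end

section
/- Let Γ be a profinite group with closed normal subgroups (Γ_ℓ)_{ℓ∈L} and continuous surjections ρ_ℓ : Γ → G_ℓ such that ρ_{ℓ'}(Γ_ℓ) = 1 whenever ℓ' ≠ ℓ. Then the image of Γ_ℓ under ρ = (ρ_ℓ) : Γ → ∏ G_ℓ is contained in the ℓ-th factor, and ρ(Γ) contains the direct product ∏_ℓ A_ℓ where A_ℓ = ρ_ℓ(Γ_ℓ). -/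
/-!
The coordinates of `ρ` kill `Γ_ℓ` away from `ℓ`, so `ρ(Γ)` contains each `A_ℓ` sitting in the
`ℓ`-th factor. Being a continuous image of a compact group, `ρ(Γ)` is closed; and an element of
`∏ A_ℓ` is the limit, over finite sets `s` of indices, of its truncations to `s`, each of which is
a finite product of single-factor elements.
-/

open Filter

theorem Subgroup.pi_univ_le_of_isClosed {ι : Type*} [DecidableEq ι] {G : ι → Type*}
    [∀ i, Group (G i)] [∀ i, TopologicalSpace (G i)] (A : ∀ i, Subgroup (G i))
    (H : Subgroup (∀ i, G i)) (hH : IsClosed (H : Set (∀ i, G i)))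
    (hA : ∀ i, ∀ a ∈ A i, Pi.mulSingle i a ∈ H) :
    Subgroup.pi Set.univ A ≤ H := by
  intro g hg
  have htrunc : ∀ s : Finset ι, s.piecewise g 1 ∈ H := by
    intro s
    induction s using Finset.induction_on with
    | empty => simp [H.one_mem]
    | insert i s hi ih =>
      have hsplit : (insert i s).piecewise g 1 = Pi.mulSingle i (g i) * s.piecewise g 1 := by
        funext j
        by_cases hj : j = i
        · subst hj
          simp [hi]
        · simp [hj, Finset.piecewise]
      rw [hsplit]
      exact H.mul_mem (hA i _ (hg i (Set.mem_univ i))) ih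
  have hlim : Tendsto (fun s : Finset ι => s.piecewise g 1) atTop (nhds g) := by
    refine tendsto_pi_nhds.mpr fun i => tendsto_nhds_of_eventually_eq ?_
    filter_upwards [eventually_ge_atTop {i}] with s hs
    exact s.piecewise_eq_of_mem g 1 (Finset.singleton_subset_iff.mp hs)
  exact hH.mem_of_tendsto hlim (Eventually.of_forall htrunc)

theorem MonoidHom.pi_apply_eq_mulSingle {Γ L : Type*} [DecidableEq L] [Monoid Γ] {G : L → Type*}
    [∀ ℓ, Monoid (G ℓ)] (ρ : ∀ ℓ, Γ →* G ℓ) {ℓ : L} {γ : Γ} (hγ : ∀ ℓ', ℓ' ≠ ℓ → ρ ℓ' γ = 1) :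
    MonoidHom.pi ρ γ = Pi.mulSingle ℓ (ρ ℓ γ) := by
  funext ℓ'
  rw [MonoidHom.pi_apply]
  by_cases h : ℓ' = ℓ
  · subst h
    simp
  · simp [h, hγ ℓ' h]

theorem stmt_19_general {Γ : Type*} [Group Γ] [TopologicalSpace Γ]
    [CompactSpace Γ]
    {L : Type*} {G : L → Type*} [∀ ℓ, Group (G ℓ)] [∀ ℓ, TopologicalSpace (G ℓ)]
    [∀ ℓ, T2Space (G ℓ)]
    (Γℓ : L → Subgroup Γ)
    (ρ : ∀ ℓ, Γ →* G ℓ) (hcont : ∀ ℓ, Continuous (ρ ℓ))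
    (htriv : ∀ ℓ ℓ' : L, ℓ' ≠ ℓ → ∀ γ ∈ Γℓ ℓ, ρ ℓ' γ = 1) :
    (∀ ℓ : L, ∀ γ ∈ Γℓ ℓ, ∀ ℓ' : L, ℓ' ≠ ℓ → Pi.monoidHom ρ γ ℓ' = 1) ∧
    Subgroup.pi Set.univ (fun ℓ => (Γℓ ℓ).map (ρ ℓ)) ≤ (Pi.monoidHom ρ).range := by
  classical
  refine ⟨fun ℓ γ hγ ℓ' hℓ' => htriv ℓ ℓ' hℓ' γ hγ, ?_⟩
  have hclosed : IsClosed ((Pi.monoidHom ρ).range : Set (∀ ℓ, G ℓ)) := by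
    rw [MonoidHom.coe_range]
    exact (isCompact_range (continuous_pi hcont)).isClosed
  refine Subgroup.pi_univ_le_of_isClosed _ _ hclosed ?_
  rintro ℓ _ ⟨γ, hγ, rfl⟩
  exact ⟨γ, MonoidHom.pi_apply_eq_mulSingle ρ fun ℓ' hℓ' => htriv ℓ ℓ' hℓ' γ hγ⟩

/-- Serre's Lemma 4 (§8.2): if `Γ_ℓ` are closed normal subgroups of `Γ` with
`ρ_{ℓ'}(Γ_ℓ) = 1` for `ℓ' ≠ ℓ`, then the image of `Γ_ℓ` under `ρ = (ρ_ℓ)` lies in the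
`ℓ`-th factor, and `ρ(Γ)` contains the product `∏_ℓ A_ℓ` where `A_ℓ = ρ_ℓ(Γ_ℓ)`. -/
theorem stmt_19 {Γ : Type*} [Group Γ] [TopologicalSpace Γ] [IsTopologicalGroup Γ]
    [CompactSpace Γ] [T2Space Γ] [TotallyDisconnectedSpace Γ]
    {L : Type*} {G : L → Type*} [∀ ℓ, Group (G ℓ)] [∀ ℓ, TopologicalSpace (G ℓ)]
    [∀ ℓ, IsTopologicalGroup (G ℓ)] [∀ ℓ, CompactSpace (G ℓ)] [∀ ℓ, T2Space (G ℓ)]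
    [∀ ℓ, TotallyDisconnectedSpace (G ℓ)]
    (Γℓ : L → Subgroup Γ) (hclosed : ∀ ℓ, IsClosed (Γℓ ℓ : Set Γ))
    (hnormal : ∀ ℓ, (Γℓ ℓ).Normal)
    (ρ : ∀ ℓ, Γ →* G ℓ) (hcont : ∀ ℓ, Continuous (ρ ℓ))
    (hsurj : ∀ ℓ, Function.Surjective (ρ ℓ))
    (htriv : ∀ ℓ ℓ' : L, ℓ' ≠ ℓ → ∀ γ ∈ Γℓ ℓ, ρ ℓ' γ = 1) :
    (∀ ℓ : L, ∀ γ ∈ Γℓ ℓ, ∀ ℓ' : L, ℓ' ≠ ℓ → Pi.monoidHom ρ γ ℓ' = 1) ∧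
    Subgroup.pi Set.univ (fun ℓ => (Γℓ ℓ).map (ρ ℓ)) ≤ (Pi.monoidHom ρ).range :=
  stmt_19_general Γℓ ρ hcont htriv
end
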